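/- arXiv:1009.1594 — 7 statements merged into one kernel-verified Lean document; each statement's English description precedes it below -/
import Mathlib

section
/- Let X be a real Banach space and let φ_1, …, φ_m : X → (−∞, ∞] be convex lower semicontinuous functions. Assume there exists a point x̄ ∈ ⋂_{i=1}^m dom φ_i at which all except possibly one of the functions φ_1, …, φ_m are continuous. Then ∂(φ_1 + … + φ_m)(x̄) = ∂φ_1(x̄) + … + ∂φ_m(x̄), where the sum on the right is the Minkowski sum of sets in X*. -/
/-!
Let `p ∈ ∂(f + g)(x̄)` with `g` continuous at `x̄`. Then `x ↦ f x - p x` is a convex function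
lying above the concave function `x ↦ f x̄ + g x̄ - p x̄ - g x`, and the two agree at `x̄`.
The epigraph of the first and the strict hypograph of the second are disjoint convex sets, the
latter with nonempty interior by continuity of `g`; a Hahn–Banach hyperplane separating them
cannot be vertical, so it is the graph of an affine function `φ + c` squeezed between them.
Its slope splits `p` as `(p + φ) + (-φ) ∈ ∂f(x̄) + ∂g(x̄)`. For `m` functions, add the
continuous ones one at a time to the exceptional one.

An extended-real convex function that never takes the value `⊥` is handled through the real
convex function `toReal ∘ f` on its domain `{x | f x ≠ ⊤}`.
-/

open scoped Pointwise

/-- The subdifferential of convex analysis of an extended-real-valued function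
`φ : X → (−∞, ∞]` (modeled as `X → EReal`) at `xb`, as a set of continuous linear
functionals. -/
def subdiff {X : Type*} [NormedAddCommGroup X] [NormedSpace ℝ X]
    (φ : X → EReal) (xb : X) : Set (X →L[ℝ] ℝ) :=
  {p | ∀ x : X, ((p (x - xb) : ℝ) : EReal) + φ xb ≤ φ x}

open Filter Topology Set

section ConvexToReal

variable {E : Type*} [AddCommGroup E] [Module ℝ E] {f g : E → EReal}

theorem convexOn_toReal_setOf_ne_top (hf : ∀ x, f x ≠ ⊥)
    (hconv : ∀ (x y : E) (t : ℝ), 0 ≤ t → t ≤ 1 →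
      f (t • x + (1 - t) • y) ≤ (t : EReal) * f x + ((1 - t : ℝ) : EReal) * f y) :
    ConvexOn ℝ {x | f x ≠ ⊤} fun x => (f x).toReal := by
  have key : ∀ x, f x ≠ ⊤ → ∀ y, f y ≠ ⊤ → ∀ a b : ℝ, 0 ≤ a → 0 ≤ b → a + b = 1 →
      f (a • x + b • y) ≤ ((a * (f x).toReal + b * (f y).toReal : ℝ) : EReal) := by
    intro x hx y hy a b ha hb hab
    obtain rfl : b = 1 - a := by linarith
    have h := hconv x y a ha (by linarith)
    rwa [← EReal.coe_toReal hx (hf x), ← EReal.coe_toReal hy (hf y), ← EReal.coe_mul,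
      ← EReal.coe_mul, ← EReal.coe_add] at h
  refine ⟨fun x hx y hy a b ha hb hab => ?_, fun x hx y hy a b ha hb hab => ?_⟩
  · exact ne_top_of_le_ne_top (EReal.coe_ne_top _) (key x hx y hy a b ha hb hab)
  · have h := EReal.toReal_le_toReal (key x hx y hy a b ha hb hab) (hf _) (EReal.coe_ne_top _)
    rwa [EReal.toReal_coe] at h

theorem convexOn_toReal_add (hf : ∀ x, f x ≠ ⊥) (hg : ∀ x, g x ≠ ⊥)
    (hfc : ConvexOn ℝ {x | f x ≠ ⊤} fun x => (f x).toReal)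
    (hgc : ConvexOn ℝ {x | g x ≠ ⊤} fun x => (g x).toReal) :
    ConvexOn ℝ {x | f x + g x ≠ ⊤} fun x => (f x + g x).toReal := by
  have hdom : {x | f x + g x ≠ ⊤} = {x | f x ≠ ⊤} ∩ {x | g x ≠ ⊤} := by
    ext x
    exact EReal.add_ne_top_iff_ne_top₂ (hf x) (hg x)
  have hconv := hfc.1.inter hgc.1
  rw [hdom]
  exact ((hfc.subset inter_subset_left hconv).add (hgc.subset inter_subset_right hconv)).congr
    fun x hx => (EReal.toReal_add hx.1 (hf x) hx.2 (hg x)).symm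

end ConvexToReal

theorem ConvexOn.exists_affine_between {E : Type*} [TopologicalSpace E] [AddCommGroup E]
    [Module ℝ E] [IsTopologicalAddGroup E] [ContinuousSMul ℝ E]
    {s t : Set E} {F G : E → ℝ} (hF : ConvexOn ℝ s F) (hG : ConcaveOn ℝ t G)
    (hGF : ∀ x ∈ s ∩ t, G x ≤ F x) {x₀ : E} (hx₀ : x₀ ∈ s) (ht : t ∈ 𝓝 x₀)
    (hGc : ContinuousAt G x₀) :
    ∃ (φ : StrongDual ℝ E) (c : ℝ), (∀ x ∈ t, G x ≤ φ x + c) ∧ ∀ x ∈ s, φ x + c ≤ F x := by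
  set A := {p : E × ℝ | p.1 ∈ s ∧ F p.1 ≤ p.2}
  set B := {p : E × ℝ | p.1 ∈ t ∧ p.2 < G p.1}
  have hz₀ : (x₀, G x₀ - 1) ∈ interior B := by
    have hG' : ∀ᶠ z : E × ℝ in 𝓝 (x₀, G x₀ - 1), z.2 < G z.1 :=
      continuousAt_snd.eventually_lt (hGc.comp continuousAt_fst) (sub_one_lt _)
    exact mem_interior_iff_mem_nhds.2 (inter_mem (continuousAt_fst.preimage_mem_nhds ht) hG')
  have hdisj : Disjoint (interior B) A := by
    refine disjoint_left.2 fun z hzB hzA => ?_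
    obtain ⟨hzt, hzG⟩ := interior_subset hzB
    linarith [hGF z.1 ⟨hzA.1, hzt⟩, hzA.2]
  obtain ⟨Φ, u, hΦB, hΦA⟩ :=
    geometric_hahn_banach_open hG.convex_strict_hypograph.interior isOpen_interior
      hF.convex_epigraph hdisj
  have hΦB' : ∀ z ∈ B, Φ z ≤ u := by
    have hcl : B ⊆ closure (interior B) := by
      rw [hG.convex_strict_hypograph.closure_interior_eq_closure_of_nonempty_interior ⟨_, hz₀⟩]
      exact subset_closure
    exact fun z hz => closure_minimal (fun w hw => (hΦB w hw).le)
      (isClosed_le Φ.continuous continuous_const) (hcl hz)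
  set ℓ : StrongDual ℝ E := Φ.comp (ContinuousLinearMap.inl ℝ E ℝ)
  set β := Φ (0, 1)
  have hΦ : ∀ x y, Φ (x, y) = ℓ x + y * β := by
    intro x y
    have : ((x, y) : E × ℝ) = (x, 0) + y • (0, 1) := by simp
    rw [this, map_add, map_smul, smul_eq_mul]
    rfl
  have hβ : 0 < β := by
    have h1 := hΦB _ hz₀
    have h2 := hΦA (x₀, F x₀) ⟨hx₀, le_rfl⟩
    rw [hΦ] at h1 h2
    have := hGF x₀ ⟨hx₀, mem_of_mem_nhds ht⟩
    nlinarith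
  refine ⟨-β⁻¹ • ℓ, u / β, fun x hx => ?_, fun x hx => ?_⟩
  · refine le_of_forall_lt_imp_le_of_dense fun y hy => ?_
    have := hΦB' (x, y) ⟨hx, hy⟩
    rw [hΦ] at this
    simp only [smul_apply, smul_eq_mul]
    field_simp
    linarith
  · have := hΦA (x, F x) ⟨hx, le_rfl⟩
    rw [hΦ] at this
    simp only [smul_apply, smul_eq_mul]
    field_simp
    linarith

section Subdiff

variable {X : Type*} [NormedAddCommGroup X] [NormedSpace ℝ X] {f g : X → EReal} {xb : X}

theorem mem_subdiff_iff_toReal (hf : ∀ x, f x ≠ ⊥) (hxb : f xb ≠ ⊤) {q : X →L[ℝ] ℝ} :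
    q ∈ subdiff f xb ↔ ∀ x, f x ≠ ⊤ → q (x - xb) + (f xb).toReal ≤ (f x).toReal := by
  refine forall_congr' fun x => ?_
  by_cases hx : f x = ⊤
  · simp [hx]
  · rw [← EReal.coe_toReal hx (hf x), ← EReal.coe_toReal hxb (hf xb), ← EReal.coe_add,
      EReal.coe_le_coe_iff]
    simp

theorem subdiff_add_subset (f g : X → EReal) (xb : X) :
    subdiff f xb + subdiff g xb ⊆ subdiff (fun x => f x + g x) xb := by
  rintro _ ⟨q, hq, r, hr, rfl⟩ x
  calc (((q + r) (x - xb) : ℝ) : EReal) + (f xb + g xb)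
      = ((q (x - xb) : ℝ) + f xb) + ((r (x - xb) : ℝ) + g xb) := by
        rw [add_apply, EReal.coe_add, add_add_add_comm]
    _ ≤ f x + g x := add_le_add (hq x) (hr x)

theorem subdiff_add_of_continuousAt (hf : ∀ x, f x ≠ ⊥) (hg : ∀ x, g x ≠ ⊥)
    (hfc : ConvexOn ℝ {x | f x ≠ ⊤} fun x => (f x).toReal)
    (hgc : ConvexOn ℝ {x | g x ≠ ⊤} fun x => (g x).toReal)
    (hfx : f xb ≠ ⊤) (hgx : g xb ≠ ⊤) (hcont : ContinuousAt g xb) :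
    subdiff (fun x => f x + g x) xb = subdiff f xb + subdiff g xb := by
  refine Subset.antisymm ?_ (subdiff_add_subset f g xb)
  intro p hp
  rw [mem_subdiff_iff_toReal (fun x => EReal.add_ne_bot_iff.2 ⟨hf x, hg x⟩)
    (EReal.add_ne_top_iff_ne_top₂ (hf xb) (hg xb) |>.2 ⟨hfx, hgx⟩)] at hp
  set a := (f xb).toReal
  set b := (g xb).toReal
  set F : X → ℝ := fun x => (f x).toReal - p x
  set G : X → ℝ := fun x => a + b - p xb - (g x).toReal
  have hF : ConvexOn ℝ {x | f x ≠ ⊤} F := hfc.sub (p.toLinearMap.concaveOn hfc.1)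
  have hG : ConcaveOn ℝ {x | g x ≠ ⊤} G := (concaveOn_const _ hgc.1).sub hgc
  have hGF : ∀ x ∈ {x | f x ≠ ⊤} ∩ {x | g x ≠ ⊤}, G x ≤ F x := by
    rintro x ⟨hfx', hgx'⟩
    have h := hp x ((EReal.add_ne_top_iff_ne_top₂ (hf x) (hg x)).2 ⟨hfx', hgx'⟩)
    rw [EReal.toReal_add hfx (hf xb) hgx (hg xb), EReal.toReal_add hfx' (hf x) hgx' (hg x),
      map_sub] at h
    simp only [F, G]
    linarith
  have hdom : {x | g x ≠ ⊤} ∈ 𝓝 xb := hcont.preimage_mem_nhds (isOpen_ne.mem_nhds hgx)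
  have hGc : ContinuousAt G xb :=
    continuousAt_const.sub ((EReal.tendsto_toReal hgx (hg xb)).comp hcont)
  obtain ⟨φ, c, hφG, hφF⟩ := hF.exists_affine_between hG hGF hfx hdom hGc
  have hc : φ xb + c = a - p xb := by
    have h1 := hφG xb hgx
    have h2 := hφF xb hfx
    simp only [F, G] at h1 h2
    linarith
  refine ⟨p + φ, ?_, -φ, ?_, add_neg_cancel_right p φ⟩
  · refine (mem_subdiff_iff_toReal hf hfx).2 fun x hx => ?_
    have h := hφF x hx
    simp only [F, add_apply, map_sub] at h ⊢
    linarith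
  · refine (mem_subdiff_iff_toReal hg hgx).2 fun x hx => ?_
    have h := hφG x hx
    simp only [G, neg_apply, map_sub] at h ⊢
    linarith

theorem subdiff_add_sum_of_continuousAt {ι : Type*} (φ : ι → X → EReal) (s : Finset ι)
    (hf : ∀ x, f x ≠ ⊥) (hφ : ∀ i x, φ i x ≠ ⊥)
    (hfc : ConvexOn ℝ {x | f x ≠ ⊤} fun x => (f x).toReal)
    (hφc : ∀ i, ConvexOn ℝ {x | φ i x ≠ ⊤} fun x => (φ i x).toReal)
    (hfx : f xb ≠ ⊤) (hφx : ∀ i, φ i xb ≠ ⊤) (hcont : ∀ i ∈ s, ContinuousAt (φ i) xb) :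
    subdiff (fun x => f x + ∑ i ∈ s, φ i x) xb = subdiff f xb + ∑ i ∈ s, subdiff (φ i) xb := by
  induction s using Finset.cons_induction generalizing f with
  | empty => simp
  | cons a s _ ih =>
    simp only [Finset.sum_cons, ← add_assoc]
    rw [ih (fun x => EReal.add_ne_bot_iff.2 ⟨hf x, hφ a x⟩)
      (convexOn_toReal_add hf (hφ a) hfc (hφc a))
      ((EReal.add_ne_top_iff_ne_top₂ (hf xb) (hφ a xb)).2 ⟨hfx, hφx a⟩)
      fun i hi => hcont i (Finset.mem_cons_of_mem hi),
      subdiff_add_of_continuousAt hf (hφ a) hfc (hφc a) hfx (hφx a)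
        (hcont a (Finset.mem_cons_self a s))]

end Subdiff

theorem stmt_0_general {X : Type*} [NormedAddCommGroup X] [NormedSpace ℝ X]
    (m : ℕ) (φ : Fin m → X → EReal)
    (hbot : ∀ i x, φ i x ≠ ⊥)
    (hconv : ∀ i (x y : X) (t : ℝ), 0 ≤ t → t ≤ 1 →
      φ i (t • x + (1 - t) • y) ≤ (t : EReal) * φ i x + ((1 - t : ℝ) : EReal) * φ i y)
    (xb : X) (hxb : ∀ i, φ i xb ≠ ⊤)
    (hcont : ∃ j : Fin m, ∀ i, i ≠ j → ContinuousAt (φ i) xb) :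
    subdiff (fun x => ∑ i, φ i x) xb = ∑ i, subdiff (φ i) xb := by
  classical
  obtain ⟨j, hj⟩ := hcont
  simp only [← Finset.add_sum_erase Finset.univ _ (Finset.mem_univ j)]
  exact subdiff_add_sum_of_continuousAt φ _ (hbot j) hbot
    (convexOn_toReal_setOf_ne_top (hbot j) (hconv j))
    (fun i => convexOn_toReal_setOf_ne_top (hbot i) (hconv i)) (hxb j) hxb
    fun i hi => hj i (Finset.ne_of_mem_erase hi)

/-- Moreau–Rockafellar theorem: subdifferential sum rule for convex functions. -/
theorem stmt_0 {X : Type*} [NormedAddCommGroup X] [NormedSpace ℝ X] [CompleteSpace X]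
    (m : ℕ) (φ : Fin m → X → EReal)
    (hbot : ∀ i x, φ i x ≠ ⊥)
    (hconv : ∀ i (x y : X) (t : ℝ), 0 ≤ t → t ≤ 1 →
      φ i (t • x + (1 - t) • y) ≤ (t : EReal) * φ i x + ((1 - t : ℝ) : EReal) * φ i y)
    (hlsc : ∀ i, LowerSemicontinuous (φ i))
    (xb : X) (hxb : ∀ i, φ i xb ≠ ⊤)
    (hcont : ∃ j : Fin m, ∀ i, i ≠ j → ContinuousAt (φ i) xb) :
    subdiff (fun x => ∑ i, φ i x) xb = ∑ i, subdiff (φ i) xb :=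
  stmt_0_general m φ hbot hconv xb hxb hcont
end

section
/- Let X be a real Banach space, let F ⊆ X be a nonempty closed bounded convex set, let Ω ⊆ X be a nonempty closed convex set, and let x̄ ∈ Ω. Then the subdifferential of convex analysis of the minimal time function T^F_Ω at x̄ satisfies ∂T^F_Ω(x̄) = N(x̄; Ω) ∩ C*, where C* := {x* ∈ X* : σ_F(−x*) ≤ 1} and σ_F(x*) := sup_{x ∈ F} ⟨x*, x⟩. -/
open scoped Pointwise

/-- The minimal time function `T^F_Ω(x) := inf{t ≥ 0 : Ω ∩ (x + tF) ≠ ∅}`,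
with values in the extended reals (`sInf ∅ = ⊤`). -/
noncomputable def minTime {X : Type*} [AddCommGroup X] [Module ℝ X]
    (F Ω : Set X) (x : X) : EReal :=
  sInf {r : EReal | ∃ t : ℝ, 0 ≤ t ∧ r = (t : EReal) ∧ ∃ f ∈ F, x + t • f ∈ Ω}

/-- The normal cone of convex analysis to `Ω` at `xb`. -/
def normalCone {X : Type*} [NormedAddCommGroup X] [NormedSpace ℝ X]
    (Ω : Set X) (xb : X) : Set (X →L[ℝ] ℝ) :=
  {p | ∀ x ∈ Ω, p (x - xb) ≤ 0}

/-! Since `T` vanishes on `Ω`, a subgradient `p` at `xb` satisfies `p (x - xb) ≤ 0` on `Ω`,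
and `-p f = p ((xb - f) - xb) ≤ T (xb - f) ≤ 1` for `f ∈ F`, because `xb - f` reaches `Ω` at
time `1`. Conversely, if `x + t • f ∈ Ω` then `p (x - xb) = p (x + t • f - xb) - t * p f ≤ t`,
so `p (x - xb)` is a lower bound of every admissible time. Boundedness of `F` makes the
supremum `σ_F (-p)` a genuine one. -/

section MinTime

variable {X : Type*} [AddCommGroup X] [Module ℝ X] {F Ω : Set X} {x : X}

lemma minTime_le {t : ℝ} (ht : 0 ≤ t) {f : X} (hf : f ∈ F) (hx : x + t • f ∈ Ω) :
    minTime F Ω x ≤ t :=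
  sInf_le ⟨t, ht, rfl, f, hf, hx⟩

lemma le_minTime {r : EReal} (h : ∀ t : ℝ, 0 ≤ t → ∀ f ∈ F, x + t • f ∈ Ω → r ≤ t) :
    r ≤ minTime F Ω x :=
  le_sInf <| by
    rintro _ ⟨t, ht, rfl, f, hf, hx⟩
    exact h t ht f hf hx

lemma minTime_of_mem (hF : F.Nonempty) (hx : x ∈ Ω) : minTime F Ω x = 0 := by
  obtain ⟨f, hf⟩ := hF
  refine le_antisymm ?_ (le_minTime fun t ht _ _ _ => mod_cast ht)
  exact_mod_cast minTime_le le_rfl hf (by simpa using hx)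

end MinTime

section Subgradients

variable {X : Type*} [NormedAddCommGroup X] [NormedSpace ℝ X]

lemma mem_subdiff_iff_of_eq_zero {φ : X → EReal} {xb : X} (h : φ xb = 0) {p : X →L[ℝ] ℝ} :
    p ∈ subdiff φ xb ↔ ∀ x, ((p (x - xb) : ℝ) : EReal) ≤ φ x := by
  simp only [subdiff, Set.mem_ofPred_eq, h, add_zero]

lemma ContinuousLinearMap.bddAbove_neg_image {F : Set X} (hF : Bornology.IsBounded F)
    (p : X →L[ℝ] ℝ) : BddAbove ((fun f => -(p f)) '' F) := by
  obtain ⟨C, hC⟩ := isBounded_iff_forall_norm_le.mp hF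
  refine ⟨‖p‖ * C, ?_⟩
  rintro _ ⟨f, hf, rfl⟩
  calc -(p f) ≤ ‖p f‖ := neg_le_abs _
    _ ≤ ‖p‖ * ‖f‖ := p.le_opNorm f
    _ ≤ ‖p‖ * C := by gcongr; exact hC f hf

variable {F Ω : Set X} {xb : X} {p : X →L[ℝ] ℝ}

lemma mem_normalCone_of_mem_subdiff_minTime (hF : F.Nonempty) (hxb : xb ∈ Ω)
    (hp : p ∈ subdiff (minTime F Ω) xb) : p ∈ normalCone Ω xb := by
  rw [mem_subdiff_iff_of_eq_zero (minTime_of_mem hF hxb)] at hp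
  intro x hx
  have := hp x
  rw [minTime_of_mem hF hx] at this
  exact_mod_cast this

lemma neg_apply_le_one_of_mem_subdiff_minTime (hxb : xb ∈ Ω)
    (hp : p ∈ subdiff (minTime F Ω) xb) {f : X} (hf : f ∈ F) : -(p f) ≤ 1 := by
  rw [mem_subdiff_iff_of_eq_zero (minTime_of_mem ⟨f, hf⟩ hxb)] at hp
  have h := (hp (xb - f)).trans (minTime_le zero_le_one hf (by simpa using hxb))
  rw [sub_sub_cancel_left, map_neg] at h
  exact_mod_cast h

lemma mem_subdiff_minTime (hF : F.Nonempty) (hxb : xb ∈ Ω) (hN : p ∈ normalCone Ω xb)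
    (hS : ∀ f ∈ F, -(p f) ≤ 1) : p ∈ subdiff (minTime F Ω) xb := by
  rw [mem_subdiff_iff_of_eq_zero (minTime_of_mem hF hxb)]
  refine fun x => le_minTime fun t ht f hf hx => ?_
  have hΩ : p (x + t • f - xb) ≤ 0 := hN _ hx
  have hf' : -(t * p f) ≤ t := by nlinarith [hS f hf]
  have : p (x - xb) = p (x + t • f - xb) - t * p f := by
    rw [← smul_eq_mul, ← map_smul, ← map_sub]
    congr 1
    abel
  exact_mod_cast (show p (x - xb) ≤ t by linarith)

end Subgradients

theorem stmt_1_general {X : Type*} [NormedAddCommGroup X] [NormedSpace ℝ X]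
    (F Ω : Set X) (hFne : F.Nonempty)
    (hFbd : Bornology.IsBounded F)
    (xb : X) (hxb : xb ∈ Ω) :
    subdiff (minTime F Ω) xb =
      normalCone Ω xb ∩ {p : X →L[ℝ] ℝ | sSup ((fun f => -(p f)) '' F) ≤ 1} := by
  ext p
  rw [Set.mem_inter_iff, Set.mem_ofPred_eq,
    csSup_le_iff (p.bddAbove_neg_image hFbd) (hFne.image _), Set.forall_mem_image]
  exact ⟨fun hp => ⟨mem_normalCone_of_mem_subdiff_minTime hFne hxb hp,
      fun _ hf => neg_apply_le_one_of_mem_subdiff_minTime hxb hp hf⟩,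
    fun ⟨hN, hS⟩ => mem_subdiff_minTime hFne hxb hN hS⟩

/-- Basic subgradients of convex minimal time functions at in-set points:
`∂T^F_Ω(x̄) = N(x̄; Ω) ∩ C*` where `C* = {x* : σ_F(−x*) ≤ 1}`. -/
theorem stmt_1 {X : Type*} [NormedAddCommGroup X] [NormedSpace ℝ X] [CompleteSpace X]
    (F Ω : Set X) (hFne : F.Nonempty) (hFcl : IsClosed F)
    (hFbd : Bornology.IsBounded F) (hFconv : Convex ℝ F)
    (hΩne : Ω.Nonempty) (hΩcl : IsClosed Ω) (hΩconv : Convex ℝ Ω)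
    (xb : X) (hxb : xb ∈ Ω) :
    subdiff (minTime F Ω) xb =
      normalCone Ω xb ∩ {p : X →L[ℝ] ℝ | sSup ((fun f => -(p f)) '' F) ≤ 1} :=
  stmt_1_general F Ω hFne hFbd xb hxb
end

section
/- Let X be a real Banach space, let F ⊆ X be a nonempty closed bounded convex set with 0 ∈ F, and let Ω ⊆ X be a nonempty closed convex set. Let x̄ ∉ Ω be such that Π^F_Ω(x̄) ≠ ∅ and T^F_Ω(x̄) < ∞. Then for every w̄ ∈ Π^F_Ω(x̄), the subdifferential of convex analysis satisfies ∂T^F_Ω(x̄) = N(w̄; Ω) ∩ (−∂ρ_F(w̄ − x̄)). -/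
open scoped Pointwise

/-- The Minkowski gauge `ρ_F(x) := inf{t ≥ 0 : x ∈ tF}`, with values in the
extended reals (`sInf ∅ = ⊤`). -/
noncomputable def gaugeE {X : Type*} [AddCommGroup X] [Module ℝ X]
    (F : Set X) (x : X) : EReal :=
  sInf {r : EReal | ∃ t : ℝ, 0 ≤ t ∧ r = (t : EReal) ∧ ∃ f ∈ F, x = t • f}

/-- The generalized projection `Π^F_Ω(x) := (x + T^F_Ω(x)·F) ∩ Ω`. -/
noncomputable def genProj {X : Type*} [AddCommGroup X] [Module ℝ X]
    (F Ω : Set X) (x : X) : Set X :=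
  {w | w ∈ Ω ∧ ∃ f ∈ F, w = x + (minTime F Ω x).toReal • f}

/-!
Put `t̄ = T(x̄)` and `v = w̄ - x̄ = t̄ f₀` with `f₀ ∈ F`. Then `ρ_F(v) = t̄`, and, unfolding the two
infima, `p ∈ ∂T(x̄)` says `p (w - x̄) + t̄ ≤ t + p (t f)` for all `w ∈ Ω`, `t ≥ 0`, `f ∈ F`, while
`-p ∈ ∂ρ_F(v)` says the same with `w = w̄`. Testing the latter with `t f = 0` and with `t f = 2v`
forces `p v = -t̄`; the extra freedom in `w` is then exactly the normal cone condition at `w̄`.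
-/

section Infimum

variable {X : Type*} [AddCommGroup X] [Module ℝ X]

lemma EReal.coe_le_sInf_nonneg_coe_iff {a : ℝ} {P : ℝ → Prop} :
    (a : EReal) ≤ sInf {r : EReal | ∃ t : ℝ, 0 ≤ t ∧ r = t ∧ P t} ↔
      ∀ t : ℝ, 0 ≤ t → P t → a ≤ t := by
  simp only [le_sInf_iff, Set.mem_ofPred_eq]
  constructor
  · intro h t ht hP
    exact_mod_cast h t ⟨t, ht, rfl, hP⟩
  · rintro h _ ⟨t, ht, rfl, hP⟩
    exact_mod_cast h t ht hP

lemma minTime_nonneg (F Ω : Set X) (x : X) : 0 ≤ minTime F Ω x :=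
  le_sInf <| by
    rintro _ ⟨t, ht, rfl, -⟩
    exact_mod_cast ht

lemma coe_toReal_minTime {F Ω : Set X} {x : X} (hfin : minTime F Ω x ≠ ⊤) :
    ((minTime F Ω x).toReal : EReal) = minTime F Ω x :=
  EReal.coe_toReal hfin (ne_bot_of_le_ne_bot (by simp) (minTime_nonneg F Ω x))

lemma minTime_le_gaugeE_sub {F Ω : Set X} {x w : X} (hw : w ∈ Ω) :
    minTime F Ω x ≤ gaugeE F (w - x) :=
  le_sInf <| by
    rintro _ ⟨t, ht, rfl, f, hf, hwf⟩
    refine sInf_le ⟨t, ht, rfl, f, hf, ?_⟩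
    rwa [← hwf, add_sub_cancel]

lemma gaugeE_sub_eq_minTime {F Ω : Set X} {x w : X} (hfin : minTime F Ω x ≠ ⊤)
    (hw : w ∈ genProj F Ω x) : gaugeE F (w - x) = minTime F Ω x := by
  obtain ⟨hwΩ, f, hf, rfl⟩ := hw
  refine le_antisymm ?_ (minTime_le_gaugeE_sub hwΩ)
  rw [← coe_toReal_minTime hfin]
  exact sInf_le ⟨_, EReal.toReal_nonneg (minTime_nonneg F Ω x), rfl, f, hf, add_sub_cancel_left _ _⟩

end Infimum

section Subdifferential

variable {X : Type*} [NormedAddCommGroup X] [NormedSpace ℝ X] {F Ω : Set X}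

lemma mem_subdiff_minTime_iff {xb : X} {tb : ℝ} (hT : minTime F Ω xb = tb) {p : X →L[ℝ] ℝ} :
    p ∈ subdiff (minTime F Ω) xb ↔
      ∀ w ∈ Ω, ∀ t : ℝ, 0 ≤ t → ∀ f ∈ F, p (w - xb) + tb ≤ t + p (t • f) := by
  simp only [subdiff, Set.mem_ofPred_eq, hT, ← EReal.coe_add]
  simp only [minTime, EReal.coe_le_sInf_nonneg_coe_iff]
  constructor
  · intro h w hw t ht f hf
    have := h (w - t • f) t ht ⟨f, hf, by rwa [sub_add_cancel]⟩
    rw [sub_right_comm, map_sub] at this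
    linarith
  · rintro h x t ht ⟨f, hf, hxf⟩
    have := h _ hxf t ht f hf
    rw [add_sub_right_comm, map_add] at this
    linarith

lemma mem_neg_subdiff_gaugeE_iff {v : X} {tb : ℝ} (hρ : gaugeE F v = tb) {p : X →L[ℝ] ℝ} :
    p ∈ -subdiff (gaugeE F) v ↔ ∀ t : ℝ, 0 ≤ t → ∀ f ∈ F, p v + tb ≤ t + p (t • f) := by
  simp only [Set.mem_neg, subdiff, Set.mem_ofPred_eq, hρ, ← EReal.coe_add]
  simp only [gaugeE, EReal.coe_le_sInf_nonneg_coe_iff, neg_apply, map_sub]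
  constructor
  · intro h t ht f hf
    linarith [h (t • f) t ht ⟨f, hf, rfl⟩]
  · rintro h _ t ht ⟨f, hf, rfl⟩
    linarith [h t ht f hf]

lemma apply_eq_neg_of_forall_add_le {p : X →L[ℝ] ℝ} {tb : ℝ} {f₀ : X} (h0F : (0 : X) ∈ F)
    (hf₀ : f₀ ∈ F) (htb : 0 ≤ tb)
    (h : ∀ t : ℝ, 0 ≤ t → ∀ f ∈ F, p (tb • f₀) + tb ≤ t + p (t • f)) :
    p (tb • f₀) = -tb := by
  have hzero := h 0 le_rfl 0 h0F
  have hdouble := h (2 * tb) (by positivity) f₀ hf₀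
  rw [smul_zero, map_zero] at hzero
  rw [mul_smul, map_smul p (2 : ℝ), smul_eq_mul] at hdouble
  linarith

end Subdifferential

theorem stmt_3_general {X : Type*} [NormedAddCommGroup X] [NormedSpace ℝ X]
    (F Ω : Set X) (h0F : (0 : X) ∈ F) (xb : X) (hfin : minTime F Ω xb ≠ ⊤) :
    ∀ wb ∈ genProj F Ω xb,
      subdiff (minTime F Ω) xb =
        normalCone Ω wb ∩ (-(subdiff (gaugeE F) (wb - xb))) := by
  intro wb hwb
  set tb := (minTime F Ω xb).toReal
  have hT : minTime F Ω xb = tb := (coe_toReal_minTime hfin).symm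
  have htb : 0 ≤ tb := EReal.toReal_nonneg (minTime_nonneg F Ω xb)
  obtain ⟨hwbΩ, f₀, hf₀, hwb_eq⟩ := id hwb
  have hv : wb - xb = tb • f₀ := by rw [hwb_eq, add_sub_cancel_left]
  have hsplit : ∀ (p : X →L[ℝ] ℝ) w, p (w - xb) = p (w - wb) + p (tb • f₀) := by
    intro p w
    rw [← hv, ← map_add, sub_add_sub_cancel]
  ext p
  rw [Set.mem_inter_iff, mem_subdiff_minTime_iff hT,
    mem_neg_subdiff_gaugeE_iff ((gaugeE_sub_eq_minTime hfin hwb).trans hT), hv]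
  constructor
  · intro h
    have hG : ∀ t : ℝ, 0 ≤ t → ∀ f ∈ F, p (tb • f₀) + tb ≤ t + p (t • f) := by
      simpa only [hv] using h wb hwbΩ
    have hpv := apply_eq_neg_of_forall_add_le h0F hf₀ htb hG
    refine ⟨fun w hw => ?_, hG⟩
    have := h w hw 0 le_rfl 0 h0F
    rw [smul_zero, map_zero, hsplit] at this
    linarith
  · rintro ⟨hN, hG⟩ w hw t ht f hf
    linarith [hN w hw, hG t ht f hf, hsplit p w]

/-- Subgradients of convex minimal time functions at out-of-set points when `0 ∈ F`:
for every `w̄ ∈ Π^F_Ω(x̄)`, `∂T^F_Ω(x̄) = N(w̄; Ω) ∩ (−∂ρ_F(w̄ − x̄))`. -/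
theorem stmt_3 {X : Type*} [NormedAddCommGroup X] [NormedSpace ℝ X] [CompleteSpace X]
    (F Ω : Set X) (hFne : F.Nonempty) (hFcl : IsClosed F)
    (hFbd : Bornology.IsBounded F) (hFconv : Convex ℝ F)
    (hΩne : Ω.Nonempty) (hΩcl : IsClosed Ω) (hΩconv : Convex ℝ Ω)
    (h0F : (0 : X) ∈ F)
    (xb : X) (hxb : xb ∉ Ω) (hproj : (genProj F Ω xb).Nonempty)
    (hfin : minTime F Ω xb ≠ ⊤) :
    ∀ wb ∈ genProj F Ω xb,
      subdiff (minTime F Ω) xb =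
        normalCone Ω wb ∩ (-(subdiff (gaugeE F) (wb - xb))) :=
  stmt_3_general F Ω h0F xb hfin
end

section
/- Let n = 2k + 1 and let Ω_i = [a_i, b_i] ⊂ ℝ, i = 1, …, n, be closed intervals with a_1 ≤ b_1 < a_2 ≤ b_2 < … < a_n ≤ b_n. Then a point x̄ ∈ ℝ minimizes D(x) := Σ_{i=1}^n d(x; [a_i, b_i]) over ℝ if and only if x̄ ∈ [a_{k+1}, b_{k+1}] (the middle interval). -/
/-!
Pair the `i`-th interval with the `(n + 1 - i)`-th one for `i ≤ k`. The two distances add up to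
at least the gap `a (n + 1 - i) - b i` between them, with equality on the whole gap, which
contains the middle interval; the unpaired middle distance is nonnegative and vanishes exactly on
the middle interval. Hence `D x ≥ Σ gaps + d(x; [a (k+1), b (k+1)])`, with `D x = Σ gaps` on the
middle interval.
-/

open Finset Metric

theorem Finset.sum_Icc_one_eq_sum_pairs_add_middle {M : Type*} [AddCommMonoid M] (f : ℕ → M)
    {k n : ℕ} (hn : n = 2 * k + 1) :
    ∑ i ∈ Icc 1 n, f i = ∑ i ∈ Icc 1 k, (f i + f (n + 1 - i)) + f (k + 1) := by
  have hsplit : Icc 1 n = Icc 1 k ∪ ({k + 1} ∪ Icc (k + 2) n) := by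
    ext i; simp only [mem_union, mem_Icc, mem_singleton]; omega
  have hreflect : ∑ i ∈ Icc 1 k, f (n + 1 - i) = ∑ i ∈ Icc (k + 2) n, f i :=
    sum_nbij' (fun i ↦ n + 1 - i) (fun i ↦ n + 1 - i)
      (fun i hi ↦ by simp only [mem_Icc] at hi ⊢; omega)
      (fun i hi ↦ by simp only [mem_Icc] at hi ⊢; omega)
      (fun i hi ↦ by simp only [mem_Icc] at hi; omega)
      (fun i hi ↦ by simp only [mem_Icc] at hi; omega)
      (fun _ _ ↦ rfl)
  rw [hsplit, sum_union, sum_union, sum_singleton, sum_add_distrib, hreflect, add_comm (f _),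
    add_assoc]
  all_goals
    simp only [disjoint_left, mem_union, mem_singleton, mem_Icc]
    omega

namespace Real

variable {a b c d x : ℝ}

theorem sub_right_le_infDist_Icc (h : a ≤ b) : x - b ≤ infDist x (Set.Icc a b) :=
  (le_infDist (Set.nonempty_Icc.2 h)).2 fun y hy ↦ by
    rw [dist_eq]; linarith [le_abs_self (x - y), hy.2]

theorem left_sub_le_infDist_Icc (h : a ≤ b) : a - x ≤ infDist x (Set.Icc a b) :=
  (le_infDist (Set.nonempty_Icc.2 h)).2 fun y hy ↦ by
    rw [dist_eq]; linarith [neg_abs_le (x - y), hy.1]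

theorem infDist_Icc_of_right_le (h : a ≤ b) (hx : b ≤ x) : infDist x (Set.Icc a b) = x - b := by
  refine le_antisymm ?_ (sub_right_le_infDist_Icc h)
  simpa [dist_eq, abs_of_nonneg (sub_nonneg.2 hx)] using
    infDist_le_dist_of_mem (x := x) (Set.right_mem_Icc.2 h)

theorem infDist_Icc_of_le_left (h : a ≤ b) (hx : x ≤ a) : infDist x (Set.Icc a b) = a - x := by
  refine le_antisymm ?_ (left_sub_le_infDist_Icc h)
  simpa [dist_eq, abs_of_nonpos (sub_nonpos.2 hx)] using
    infDist_le_dist_of_mem (x := x) (Set.left_mem_Icc.2 h)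

theorem sub_le_infDist_Icc_add_infDist_Icc (hab : a ≤ b) (hcd : c ≤ d) :
    c - b ≤ infDist x (Set.Icc a b) + infDist x (Set.Icc c d) := by
  linarith [sub_right_le_infDist_Icc (x := x) hab, left_sub_le_infDist_Icc (x := x) hcd]

theorem infDist_Icc_add_infDist_Icc_of_mem (hab : a ≤ b) (hcd : c ≤ d)
    (hx : x ∈ Set.Icc b c) :
    infDist x (Set.Icc a b) + infDist x (Set.Icc c d) = c - b := by
  rw [infDist_Icc_of_right_le hab hx.1, infDist_Icc_of_le_left hcd hx.2]
  ring

end Real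

section SeparatedIntervals

variable {n : ℕ} {a b : ℕ → ℝ}

theorem right_lt_left_of_lt (hab : ∀ i, 1 ≤ i → i ≤ n → a i ≤ b i)
    (hsep : ∀ i, 1 ≤ i → i < n → b i < a (i + 1)) {i j : ℕ} (hi : 1 ≤ i) (hij : i < j)
    (hj : j ≤ n) : b i < a j := by
  induction j, hij using Nat.le_induction with
  | base => exact hsep i hi (by omega)
  | succ j hij ih =>
    exact (ih (by omega)).trans_le
      ((hab j (by omega) (by omega)).trans (hsep j (by omega) (by omega)).le)

variable {k : ℕ} (hn : n = 2 * k + 1) (hab : ∀ i, 1 ≤ i → i ≤ n → a i ≤ b i)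
include hn hab

theorem sum_gaps_add_infDist_middle_le (x : ℝ) :
    ∑ i ∈ Icc 1 k, (a (n + 1 - i) - b i) + infDist x (Set.Icc (a (k + 1)) (b (k + 1))) ≤
      ∑ i ∈ Icc 1 n, infDist x (Set.Icc (a i) (b i)) := by
  rw [sum_Icc_one_eq_sum_pairs_add_middle _ hn]
  gcongr with i hi
  rw [mem_Icc] at hi
  exact Real.sub_le_infDist_Icc_add_infDist_Icc (hab i hi.1 (by omega))
    (hab _ (by omega) (by omega))

theorem sum_infDist_eq_sum_gaps (hsep : ∀ i, 1 ≤ i → i < n → b i < a (i + 1)) {x : ℝ}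
    (hx : x ∈ Set.Icc (a (k + 1)) (b (k + 1))) :
    ∑ i ∈ Icc 1 n, infDist x (Set.Icc (a i) (b i)) =
      ∑ i ∈ Icc 1 k, (a (n + 1 - i) - b i) := by
  rw [sum_Icc_one_eq_sum_pairs_add_middle _ hn, infDist_zero_of_mem hx, add_zero]
  refine sum_congr rfl fun i hi ↦ ?_
  rw [mem_Icc] at hi
  refine Real.infDist_Icc_add_infDist_Icc_of_mem (hab i hi.1 (by omega))
    (hab _ (by omega) (by omega)) ⟨?_, ?_⟩
  · exact (right_lt_left_of_lt hab hsep hi.1 (by omega) (by omega)).le.trans hx.1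
  · exact hx.2.trans (right_lt_left_of_lt hab hsep (by omega) (by omega) (by omega)).le

end SeparatedIntervals

/-- Fermat–Torricelli problem for an odd number `n = 2k + 1` of disjoint closed
intervals `[a_i, b_i]`, `i = 1, …, n`, on the real line: `x̄` minimizes
`D(x) = Σ_{i=1}^n d(x; [a_i, b_i])` if and only if `x̄` belongs to the middle
interval `[a_{k+1}, b_{k+1}]`. -/
theorem stmt_8 (k n : ℕ) (hn : n = 2 * k + 1) (a b : ℕ → ℝ)
    (hab : ∀ i, 1 ≤ i → i ≤ n → a i ≤ b i)
    (hsep : ∀ i, 1 ≤ i → i < n → b i < a (i + 1))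
    (xb : ℝ) :
    (∀ x : ℝ, (∑ i ∈ Finset.Icc 1 n, Metric.infDist xb (Set.Icc (a i) (b i))) ≤
        ∑ i ∈ Finset.Icc 1 n, Metric.infDist x (Set.Icc (a i) (b i))) ↔
      xb ∈ Set.Icc (a (k + 1)) (b (k + 1)) := by
  have hmid : a (k + 1) ≤ b (k + 1) := hab (k + 1) (by omega) (by omega)
  have hlow := sum_gaps_add_infDist_middle_le hn hab
  have heq := sum_infDist_eq_sum_gaps hn hab hsep (x := a (k + 1)) (Set.left_mem_Icc.2 hmid)
  constructor
  · intro hxb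
    have hdist : infDist xb (Set.Icc (a (k + 1)) (b (k + 1))) ≤ 0 := by
      linarith [hlow xb, hxb (a (k + 1))]
    exact (isClosed_Icc.mem_iff_infDist_zero (Set.nonempty_Icc.2 hmid)).2
      (hdist.antisymm infDist_nonneg)
  · intro hxb x
    rw [sum_infDist_eq_sum_gaps hn hab hsep hxb]
    linarith [hlow x, infDist_nonneg (x := x) (s := Set.Icc (a (k + 1)) (b (k + 1)))]
end

section
/- Let X be a real Hilbert space and let Ω_1, Ω_2, Ω_3 ⊆ X be pairwise disjoint nonempty closed convex sets. For x̄ ∈ X and each i with x̄ ∉ Ω_i set a_i := (x̄ − P_{Ω_i}(x̄)) / d(x̄; Ω_i). Then x̄ minimizes D(x) := Σ_{i=1}^3 d(x; Ω_i) over X if and only if one of the following holds: (i) there is an index i (say i = 1 after relabeling) with x̄ ∈ Ω_1, x̄ ∉ Ω_2, x̄ ∉ Ω_3, ⟨a_2, a_3⟩ ≤ −1/2, and −a_2 − a_3 ∈ N(x̄; Ω_1); (ii) x̄ ∉ Ω_1 ∪ Ω_2 ∪ Ω_3 and ⟨a_i, a_j⟩ = −1/2 for all i ≠ j with i, j ∈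 {1, 2, 3}. -/
/-!
Off `Ωᵢ` the distance function `d(·; Ωᵢ)` is differentiable at `x̄` with gradient `aᵢ`: the
variational inequality of the projection gives the affine minorant `d(x̄; Ωᵢ) + ⟪aᵢ, · - x̄⟫`,
and `‖· - P_{Ωᵢ}(x̄)‖` is a majorant with the same value and gradient at `x̄`. On `Ω` the
distance function vanishes and grows at most like `‖· - x̄‖`, so `x̄ ∈ Ω` minimizes `f + d(·; Ω)`,
for `f` differentiable at `x̄` and above its tangent, iff `-f'(x̄)` is a normal to `Ω` of norm
`≤ 1`: one-sided difference quotients give necessity, the minorants sufficiency. What remains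
is algebra of unit vectors: `a₁ + a₂ + a₃ = 0` iff all `⟪aᵢ, aⱼ⟫ = -1/2`, and
`‖a₂ + a₃‖ ≤ 1` iff `⟪a₂, a₃⟫ ≤ -1/2`.
-/

open Metric Filter Asymptotics
open scoped RealInnerProductSpace

section NormedSpace

variable {E : Type*} [NormedAddCommGroup E] [NormedSpace ℝ E]
  {f : E → ℝ} {f' : E →L[ℝ] ℝ} {x : E}

theorem HasFDerivAt.neg_le_apply_of_forall_le (hf : HasFDerivAt f f' x) {v : E} {C : ℝ}
    (h : ∀ t : ℝ, 0 < t → t ≤ 1 → f x ≤ f (x + t • v) + t * C) : -C ≤ f' v := by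
  refine ge_of_tendsto (hf.lim_real v) ?_
  filter_upwards [eventually_ge_atTop 1] with c hc
  have hc₀ : 0 < c := by linarith
  have hle := h c⁻¹ (inv_pos.2 hc₀) (inv_le_one_of_one_le₀ hc)
  calc -C = c * -(c⁻¹ * C) := by field_simp
    _ ≤ c • (f (x + c⁻¹ • v) - f x) := by rw [smul_eq_mul]; gcongr; linarith

theorem neg_apply_sub_le_infDist {Ω : Set E} {ℓ : E →L[ℝ] ℝ} (hx : x ∈ Ω) (hℓ : ‖ℓ‖ ≤ 1)
    (hN : ∀ ω ∈ Ω, 0 ≤ ℓ (ω - x)) (y : E) : -ℓ (y - x) ≤ infDist y Ω := by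
  refine (le_infDist ⟨x, hx⟩).2 fun ω hω => ?_
  calc -ℓ (y - x) = ℓ (ω - y) - ℓ (ω - x) := by rw [← map_sub, ← map_neg]; congr 1; abel
    _ ≤ ‖ω - y‖ - 0 :=
      sub_le_sub ((le_abs_self _).trans ((ℓ.le_of_opNorm_le hℓ _).trans_eq (one_mul _))) (hN ω hω)
    _ = dist y ω := by rw [sub_zero, dist_eq_norm']

theorem HasFDerivAt.forall_le_iff_eq_zero (hf : HasFDerivAt f f' x)
    (hsub : ∀ y, f x + f' (y - x) ≤ f y) : (∀ y, f x ≤ f y) ↔ f' = 0 :=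
  ⟨fun h => IsLocalMin.hasFDerivAt_eq_zero (Eventually.of_forall h) hf,
    fun h y => by simpa [h] using hsub y⟩

theorem forall_add_infDist_le_iff {Ω : Set E} (hcv : Convex ℝ Ω) (hx : x ∈ Ω)
    (hf : HasFDerivAt f f' x) (hsub : ∀ y, f x + f' (y - x) ≤ f y) :
    (∀ y, f x + infDist x Ω ≤ f y + infDist y Ω) ↔ ‖f'‖ ≤ 1 ∧ ∀ ω ∈ Ω, 0 ≤ f' (ω - x) := by
  rw [infDist_zero_of_mem hx, add_zero]
  constructor
  · intro hmin
    have hslope : ∀ v, -‖v‖ ≤ f' v := fun v => hf.neg_le_apply_of_forall_le fun t ht _ => by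
      have hd : infDist (x + t • v) Ω ≤ t * ‖v‖ := by
        simpa [norm_smul, abs_of_pos ht] using infDist_le_dist_of_mem (x := x + t • v) hx
      linarith [hmin (x + t • v)]
    have hnormal : ∀ ω ∈ Ω, 0 ≤ f' (ω - x) := fun ω hω => by
      rw [← neg_zero]
      refine hf.neg_le_apply_of_forall_le fun t ht ht₁ => ?_
      have hmem : x + t • (ω - x) ∈ Ω := by
        simpa [smul_sub, sub_smul, add_sub_assoc'] using hcv.add_smul_sub_mem hx hω ⟨ht.le, ht₁⟩
      simpa [infDist_zero_of_mem hmem] using hmin (x + t • (ω - x))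
    refine ⟨f'.opNorm_le_bound zero_le_one fun v => ?_, hnormal⟩
    have hneg := hslope (-v)
    rw [map_neg, norm_neg] at hneg
    rw [Real.norm_eq_abs, one_mul, abs_le]
    exact ⟨hslope v, by linarith⟩
  · rintro ⟨hnorm, hN⟩ y
    linarith [hsub y, neg_apply_sub_le_infDist hx hnorm hN y]

end NormedSpace

section InnerProductSpace

variable {X : Type*} [NormedAddCommGroup X] [InnerProductSpace ℝ X] {Ω : Set X} {x p : X}

theorem hasFDerivAt_norm_sub (h : x ≠ p) :
    HasFDerivAt (fun y => ‖y - p‖) (innerSL ℝ (‖x - p‖⁻¹ • (x - p))) x := by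
  have hx : ‖x - p‖ ^ 2 ≠ 0 := by simpa [sub_eq_zero] using h
  convert (((hasFDerivAt_id x).sub_const p).norm_sq).sqrt hx using 1
  · simp [Real.sqrt_sq (norm_nonneg _)]
  · ext v
    simp [Real.sqrt_sq (norm_nonneg _)]
    field_simp

theorem Convex.infDist_add_inner_le (hcv : Convex ℝ Ω) (hp : p ∈ Ω) (hd : ‖x - p‖ = infDist x Ω)
    (y : X) : infDist x Ω + ⟪(infDist x Ω)⁻¹ • (x - p), y - x⟫ ≤ infDist y Ω := by
  rcases (infDist_nonneg (x := x) (s := Ω)).eq_or_lt with h₀ | hpos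
  · simp [← h₀, infDist_nonneg]
  have hproj : ∀ ω ∈ Ω, ⟪x - p, ω - p⟫ ≤ 0 := by
    refine (norm_eq_iInf_iff_real_inner_le_zero hcv hp).1 ?_
    simp_rw [hd, infDist_eq_iInf, dist_eq_norm]
  rw [← hd] at hpos ⊢
  refine (le_infDist ⟨p, hp⟩).2 fun ω hω => ?_
  rw [real_inner_smul_left, ← div_eq_inv_mul, ← le_sub_iff_add_le', div_le_iff₀ hpos]
  calc ⟪x - p, y - x⟫ = ⟪x - p, y - ω⟫ - ‖x - p‖ ^ 2 + ⟪x - p, ω - p⟫ := by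
        rw [← real_inner_self_eq_norm_sq, ← inner_sub_right, ← inner_add_right]; congr 1; abel
    _ ≤ ‖x - p‖ * ‖y - ω‖ - ‖x - p‖ ^ 2 + 0 := by
        gcongr
        exacts [real_inner_le_norm _ _, hproj ω hω]
    _ = (dist y ω - ‖x - p‖) * ‖x - p‖ := by rw [dist_eq_norm]; ring

theorem Convex.hasFDerivAt_infDist (hcv : Convex ℝ Ω) (hp : p ∈ Ω)
    (hd : ‖x - p‖ = infDist x Ω) (hx : x ∉ Ω) :
    HasFDerivAt (fun y => infDist y Ω) (innerSL ℝ ((infDist x Ω)⁻¹ • (x - p))) x := by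
  have hnorm := hasFDerivAt_norm_sub (ne_of_mem_of_not_mem hp hx).symm
  rw [hd] at hnorm
  rw [hasFDerivAt_iff_isLittleO_nhds_zero] at hnorm ⊢
  refine (isBigO_of_le _ fun h => ?_).trans_isLittleO hnorm
  have hlow := hcv.infDist_add_inner_le hp hd (x + h)
  have hup : infDist (x + h) Ω ≤ ‖x + h - p‖ := by
    simpa [dist_eq_norm] using infDist_le_dist_of_mem (x := x + h) hp
  simp only [innerSL_apply_apply, add_sub_cancel_left, Real.norm_eq_abs] at hlow ⊢
  rw [abs_of_nonneg (by linarith), abs_of_nonneg (by linarith)]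
  linarith

theorem norm_inv_infDist_smul_sub (hp : p ∈ Ω) (hd : ‖x - p‖ = infDist x Ω) (hx : x ∉ Ω) :
    ‖(infDist x Ω)⁻¹ • (x - p)‖ = 1 := by
  rw [← hd]
  exact norm_smul_inv_norm (sub_ne_zero.2 (ne_of_mem_of_not_mem hp hx).symm)

theorem norm_add_le_one_iff {a b : X} (ha : ‖a‖ = 1) (hb : ‖b‖ = 1) :
    ‖a + b‖ ≤ 1 ↔ ⟪a, b⟫ ≤ -(1 / 2) := by
  rw [← sq_le_one_iff₀ (norm_nonneg _), norm_add_sq_real, ha, hb]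
  constructor <;> intro h <;> linarith

theorem add_add_eq_zero_iff {a b c : X} (ha : ‖a‖ = 1) (hb : ‖b‖ = 1) (hc : ‖c‖ = 1) :
    a + b + c = 0 ↔ ⟪a, b⟫ = -(1 / 2) ∧ ⟪b, c⟫ = -(1 / 2) ∧ ⟪a, c⟫ = -(1 / 2) := by
  have hexp : ∀ v, ⟪v, a + b + c⟫ = ⟪v, a⟫ + ⟪v, b⟫ + ⟪v, c⟫ := fun v => by
    simp only [inner_add_right]
  have haa : ⟪a, a⟫ = 1 := by rw [real_inner_self_eq_norm_sq, ha, one_pow]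
  have hbb : ⟪b, b⟫ = 1 := by rw [real_inner_self_eq_norm_sq, hb, one_pow]
  have hcc : ⟪c, c⟫ = 1 := by rw [real_inner_self_eq_norm_sq, hc, one_pow]
  have hba := real_inner_comm a b
  have hca := real_inner_comm a c
  have hcb := real_inner_comm b c
  constructor
  · intro h
    have e₁ := hexp a; have e₂ := hexp b; have e₃ := hexp c
    rw [h, inner_zero_right] at e₁ e₂ e₃
    refine ⟨?_, ?_, ?_⟩ <;> linarith
  · rintro ⟨hab, hbc, hac⟩
    rw [← inner_self_eq_zero (𝕜 := ℝ), inner_add_left, inner_add_left, hexp, hexp, hexp]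
    linarith

end InnerProductSpace

section FermatTorricelli

variable {X : Type*} [NormedAddCommGroup X] [InnerProductSpace ℝ X] {Ω₁ Ω₂ Ω₃ : Set X}
  {xb p₁ p₂ p₃ a₁ a₂ a₃ : X}

theorem forall_infDist_sum_le_iff_of_mem (h₁cv : Convex ℝ Ω₁) (h₂cv : Convex ℝ Ω₂)
    (h₃cv : Convex ℝ Ω₃)
    (hp₂ : p₂ ∈ Ω₂ ∧ ‖xb - p₂‖ = infDist xb Ω₂) (hp₃ : p₃ ∈ Ω₃ ∧ ‖xb - p₃‖ = infDist xb Ω₃)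
    (ha₂ : a₂ = (infDist xb Ω₂)⁻¹ • (xb - p₂)) (ha₃ : a₃ = (infDist xb Ω₃)⁻¹ • (xb - p₃))
    (hx₁ : xb ∈ Ω₁) (hx₂ : xb ∉ Ω₂) (hx₃ : xb ∉ Ω₃) :
    (∀ x, infDist xb Ω₁ + infDist xb Ω₂ + infDist xb Ω₃ ≤
        infDist x Ω₁ + infDist x Ω₂ + infDist x Ω₃) ↔
      ⟪a₂, a₃⟫ ≤ -(1 / 2) ∧ ∀ x ∈ Ω₁, ⟪-a₂ - a₃, x - xb⟫ ≤ 0 := by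
  have hf : HasFDerivAt (fun y => infDist y Ω₂ + infDist y Ω₃) (innerSL ℝ (a₂ + a₃)) xb := by
    rw [map_add, ha₂, ha₃]
    exact (h₂cv.hasFDerivAt_infDist hp₂.1 hp₂.2 hx₂).add
      (h₃cv.hasFDerivAt_infDist hp₃.1 hp₃.2 hx₃)
  have hsub : ∀ y, infDist xb Ω₂ + infDist xb Ω₃ + innerSL ℝ (a₂ + a₃) (y - xb) ≤
      infDist y Ω₂ + infDist y Ω₃ := fun y => by
    rw [innerSL_apply_apply, inner_add_left, ha₂, ha₃]
    linarith [h₂cv.infDist_add_inner_le hp₂.1 hp₂.2 y, h₃cv.infDist_add_inner_le hp₃.1 hp₃.2 y]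
  have hmin := forall_add_infDist_le_iff h₁cv hx₁ hf hsub
  rw [innerSL_apply_norm, norm_add_le_one_iff (ha₂ ▸ norm_inv_infDist_smul_sub hp₂.1 hp₂.2 hx₂)
    (ha₃ ▸ norm_inv_infDist_smul_sub hp₃.1 hp₃.2 hx₃)] at hmin
  refine (forall_congr' fun y => ?_).trans
    (hmin.trans (and_congr_right' (forall₂_congr fun x _ => ?_)))
  · constructor <;> intro h <;> linarith
  · rw [innerSL_apply_apply, ← neg_add', inner_neg_left, neg_nonpos]

theorem forall_infDist_sum_le_iff_of_notMem (h₁cv : Convex ℝ Ω₁) (h₂cv : Convex ℝ Ω₂)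
    (h₃cv : Convex ℝ Ω₃) (hp₁ : p₁ ∈ Ω₁ ∧ ‖xb - p₁‖ = infDist xb Ω₁)
    (hp₂ : p₂ ∈ Ω₂ ∧ ‖xb - p₂‖ = infDist xb Ω₂) (hp₃ : p₃ ∈ Ω₃ ∧ ‖xb - p₃‖ = infDist xb Ω₃)
    (ha₁ : a₁ = (infDist xb Ω₁)⁻¹ • (xb - p₁)) (ha₂ : a₂ = (infDist xb Ω₂)⁻¹ • (xb - p₂))
    (ha₃ : a₃ = (infDist xb Ω₃)⁻¹ • (xb - p₃)) (hx₁ : xb ∉ Ω₁) (hx₂ : xb ∉ Ω₂) (hx₃ : xb ∉ Ω₃) :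
    (∀ x, infDist xb Ω₁ + infDist xb Ω₂ + infDist xb Ω₃ ≤
        infDist x Ω₁ + infDist x Ω₂ + infDist x Ω₃) ↔
      ⟪a₁, a₂⟫ = -(1 / 2) ∧ ⟪a₂, a₃⟫ = -(1 / 2) ∧ ⟪a₁, a₃⟫ = -(1 / 2) := by
  have hf : HasFDerivAt (fun y => infDist y Ω₁ + infDist y Ω₂ + infDist y Ω₃)
      (innerSL ℝ (a₁ + a₂ + a₃)) xb := by
    rw [map_add, map_add, ha₁, ha₂, ha₃]
    exact ((h₁cv.hasFDerivAt_infDist hp₁.1 hp₁.2 hx₁).add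
      (h₂cv.hasFDerivAt_infDist hp₂.1 hp₂.2 hx₂)).add (h₃cv.hasFDerivAt_infDist hp₃.1 hp₃.2 hx₃)
  have hsub : ∀ y, infDist xb Ω₁ + infDist xb Ω₂ + infDist xb Ω₃ +
      innerSL ℝ (a₁ + a₂ + a₃) (y - xb) ≤ infDist y Ω₁ + infDist y Ω₂ + infDist y Ω₃ :=
    fun y => by
      rw [innerSL_apply_apply, inner_add_left, inner_add_left, ha₁, ha₂, ha₃]
      linarith [h₁cv.infDist_add_inner_le hp₁.1 hp₁.2 y, h₂cv.infDist_add_inner_le hp₂.1 hp₂.2 y,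
        h₃cv.infDist_add_inner_le hp₃.1 hp₃.2 y]
  rw [hf.forall_le_iff_eq_zero hsub, ← map_zero (innerSL ℝ), innerSL_inj]
  exact add_add_eq_zero_iff (ha₁ ▸ norm_inv_infDist_smul_sub hp₁.1 hp₁.2 hx₁)
    (ha₂ ▸ norm_inv_infDist_smul_sub hp₂.1 hp₂.2 hx₂)
    (ha₃ ▸ norm_inv_infDist_smul_sub hp₃.1 hp₃.2 hx₃)

end FermatTorricelli

theorem stmt_10_general {X : Type*} [NormedAddCommGroup X] [InnerProductSpace ℝ X]
    (Ω₁ Ω₂ Ω₃ : Set X)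
    (h₁cv : Convex ℝ Ω₁) (h₂cv : Convex ℝ Ω₂) (h₃cv : Convex ℝ Ω₃)
    (h12 : Disjoint Ω₁ Ω₂) (h13 : Disjoint Ω₁ Ω₃) (h23 : Disjoint Ω₂ Ω₃)
    (xb : X) (p₁ p₂ p₃ : X)
    (hp₁ : p₁ ∈ Ω₁ ∧ ‖xb - p₁‖ = Metric.infDist xb Ω₁)
    (hp₂ : p₂ ∈ Ω₂ ∧ ‖xb - p₂‖ = Metric.infDist xb Ω₂)
    (hp₃ : p₃ ∈ Ω₃ ∧ ‖xb - p₃‖ = Metric.infDist xb Ω₃)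
    (a₁ a₂ a₃ : X)
    (ha₁ : a₁ = (Metric.infDist xb Ω₁)⁻¹ • (xb - p₁))
    (ha₂ : a₂ = (Metric.infDist xb Ω₂)⁻¹ • (xb - p₂))
    (ha₃ : a₃ = (Metric.infDist xb Ω₃)⁻¹ • (xb - p₃)) :
    (∀ x : X, Metric.infDist xb Ω₁ + Metric.infDist xb Ω₂ + Metric.infDist xb Ω₃ ≤
        Metric.infDist x Ω₁ + Metric.infDist x Ω₂ + Metric.infDist x Ω₃) ↔
      ((xb ∈ Ω₁ ∧ xb ∉ Ω₂ ∧ xb ∉ Ω₃ ∧ (inner ℝ a₂ a₃ : ℝ) ≤ -(1/2) ∧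
          ∀ x ∈ Ω₁, (inner ℝ (-a₂ - a₃) (x - xb) : ℝ) ≤ 0) ∨
        (xb ∈ Ω₂ ∧ xb ∉ Ω₁ ∧ xb ∉ Ω₃ ∧ (inner ℝ a₁ a₃ : ℝ) ≤ -(1/2) ∧
          ∀ x ∈ Ω₂, (inner ℝ (-a₁ - a₃) (x - xb) : ℝ) ≤ 0) ∨
        (xb ∈ Ω₃ ∧ xb ∉ Ω₁ ∧ xb ∉ Ω₂ ∧ (inner ℝ a₁ a₂ : ℝ) ≤ -(1/2) ∧
          ∀ x ∈ Ω₃, (inner ℝ (-a₁ - a₂) (x - xb) : ℝ) ≤ 0) ∨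
        (xb ∉ Ω₁ ∧ xb ∉ Ω₂ ∧ xb ∉ Ω₃ ∧ (inner ℝ a₁ a₂ : ℝ) = -(1/2) ∧
          (inner ℝ a₂ a₃ : ℝ) = -(1/2) ∧ (inner ℝ a₁ a₃ : ℝ) = -(1/2))) := by
  by_cases hx₁ : xb ∈ Ω₁
  · have hx₂ := h12.notMem_of_mem_left hx₁
    have hx₃ := h13.notMem_of_mem_left hx₁
    simp only [hx₁, hx₂, hx₃, not_true_eq_false, not_false_eq_true, true_and, false_and, or_false]
    exact forall_infDist_sum_le_iff_of_mem h₁cv h₂cv h₃cv hp₂ hp₃ ha₂ ha₃ hx₁ hx₂ hx₃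
  by_cases hx₂ : xb ∈ Ω₂
  · have hx₃ := h23.notMem_of_mem_left hx₂
    simp only [hx₁, hx₂, hx₃, not_true_eq_false, not_false_eq_true, true_and, false_and,
      false_or, or_false]
    rw [← forall_infDist_sum_le_iff_of_mem h₂cv h₁cv h₃cv hp₁ hp₃ ha₁ ha₃ hx₂ hx₁ hx₃]
    exact forall_congr' fun x => by rw [add_comm (infDist xb Ω₂), add_comm (infDist x Ω₂)]
  by_cases hx₃ : xb ∈ Ω₃
  · simp only [hx₁, hx₂, hx₃, not_true_eq_false, not_false_eq_true, true_and, false_and,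
      false_or, or_false]
    rw [← forall_infDist_sum_le_iff_of_mem h₃cv h₁cv h₂cv hp₁ hp₂ ha₁ ha₂ hx₃ hx₁ hx₂]
    exact forall_congr' fun x => by rw [add_rotate (infDist xb Ω₃), add_rotate (infDist x Ω₃)]
  simp only [hx₁, hx₂, hx₃, not_false_eq_true, true_and, false_and, false_or]
  exact forall_infDist_sum_le_iff_of_notMem h₁cv h₂cv h₃cv hp₁ hp₂ hp₃ ha₁ ha₂ ha₃ hx₁ hx₂ hx₃

/-- Characterizations of generalized Fermat–Torricelli points for three pairwise
disjoint nonempty closed convex sets in a Hilbert space: `x̄` minimizes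
`D(x) = d(x; Ω₁) + d(x; Ω₂) + d(x; Ω₃)` if and only if either
(i) `x̄` lies in one of the sets, does not lie in the other two, and (with
`a_i = (x̄ − P_{Ω_i}(x̄))/d(x̄; Ω_i)` for the other two indices) `⟨a_i, a_j⟩ ≤ −1/2`
and `−a_i − a_j ∈ N(x̄; ·)` for the set containing `x̄`; or
(ii) `x̄` lies in none of the sets and `⟨a_i, a_j⟩ = −1/2` for all `i ≠ j`. -/
theorem stmt_10 {X : Type*} [NormedAddCommGroup X] [InnerProductSpace ℝ X]
    [CompleteSpace X]
    (Ω₁ Ω₂ Ω₃ : Set X)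
    (h₁ne : Ω₁.Nonempty) (h₂ne : Ω₂.Nonempty) (h₃ne : Ω₃.Nonempty)
    (h₁cl : IsClosed Ω₁) (h₂cl : IsClosed Ω₂) (h₃cl : IsClosed Ω₃)
    (h₁cv : Convex ℝ Ω₁) (h₂cv : Convex ℝ Ω₂) (h₃cv : Convex ℝ Ω₃)
    (h12 : Disjoint Ω₁ Ω₂) (h13 : Disjoint Ω₁ Ω₃) (h23 : Disjoint Ω₂ Ω₃)
    (xb : X) (p₁ p₂ p₃ : X)
    (hp₁ : p₁ ∈ Ω₁ ∧ ‖xb - p₁‖ = Metric.infDist xb Ω₁)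
    (hp₂ : p₂ ∈ Ω₂ ∧ ‖xb - p₂‖ = Metric.infDist xb Ω₂)
    (hp₃ : p₃ ∈ Ω₃ ∧ ‖xb - p₃‖ = Metric.infDist xb Ω₃)
    (a₁ a₂ a₃ : X)
    (ha₁ : a₁ = (Metric.infDist xb Ω₁)⁻¹ • (xb - p₁))
    (ha₂ : a₂ = (Metric.infDist xb Ω₂)⁻¹ • (xb - p₂))
    (ha₃ : a₃ = (Metric.infDist xb Ω₃)⁻¹ • (xb - p₃)) :
    (∀ x : X, Metric.infDist xb Ω₁ + Metric.infDist xb Ω₂ + Metric.infDist xb Ω₃ ≤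
        Metric.infDist x Ω₁ + Metric.infDist x Ω₂ + Metric.infDist x Ω₃) ↔
      ((xb ∈ Ω₁ ∧ xb ∉ Ω₂ ∧ xb ∉ Ω₃ ∧ (inner ℝ a₂ a₃ : ℝ) ≤ -(1/2) ∧
          ∀ x ∈ Ω₁, (inner ℝ (-a₂ - a₃) (x - xb) : ℝ) ≤ 0) ∨
        (xb ∈ Ω₂ ∧ xb ∉ Ω₁ ∧ xb ∉ Ω₃ ∧ (inner ℝ a₁ a₃ : ℝ) ≤ -(1/2) ∧
          ∀ x ∈ Ω₂, (inner ℝ (-a₁ - a₃) (x - xb) : ℝ) ≤ 0) ∨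
        (xb ∈ Ω₃ ∧ xb ∉ Ω₁ ∧ xb ∉ Ω₂ ∧ (inner ℝ a₁ a₂ : ℝ) ≤ -(1/2) ∧
          ∀ x ∈ Ω₃, (inner ℝ (-a₁ - a₂) (x - xb) : ℝ) ≤ 0) ∨
        (xb ∉ Ω₁ ∧ xb ∉ Ω₂ ∧ xb ∉ Ω₃ ∧ (inner ℝ a₁ a₂ : ℝ) = -(1/2) ∧
          (inner ℝ a₂ a₃ : ℝ) = -(1/2) ∧ (inner ℝ a₁ a₃ : ℝ) = -(1/2))) :=
  stmt_10_general Ω₁ Ω₂ Ω₃ h₁cv h₂cv h₃cv h12 h13 h23 xb p₁ p₂ p₃ hp₁ hp₂ hp₃ a₁ a₂ a₃ ha₁ ha₂ ha₃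
end

section
/- In X = ℝ² with the Euclidean inner product, let F = [−1, 1] × [−1, 1] and let Ω = [a − r, a + r] × [b − r, b + r] be a square of right position centered at c = (a, b) with radius r > 0. Define v(x̄₁, x̄₂) := (1, 0) if |x̄₂ − b| ≤ x̄₁ − a and x̄₁ > a + r; (−1, 0) if |x̄₂ − b| ≤ a − x̄₁ and x̄₁ < a − r; (0, 1) if |x̄₁ − a| ≤ x̄₂ − b and x̄₂ > b + r; (0, −1) if |x̄₁ − a| ≤ b − x̄₂ and x̄₂ < b − r; and (0, 0) if (x̄₁, x̄₂) ∈ Ω. Then in each of these cases v(x̄₁, x̄₂) is a subgradient of the minimal time function T^F_Ω at (x̄₁, x̄₂), i.e., v(x̄₁, x̄₂) ∈ ∂T^F_Ω(x̄₁, x̄₂). -/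
/-- The subdifferential of convex analysis of `φ : ℝ² → (−∞, ∞]` at `z`,
via the Euclidean pairing on `ℝ × ℝ`. -/
def subdiff2 (φ : ℝ × ℝ → EReal) (z : ℝ × ℝ) : Set (ℝ × ℝ) :=
  {v | ∀ w : ℝ × ℝ, ((v.1 * (w.1 - z.1) + v.2 * (w.2 - z.2) : ℝ) : EReal) + φ z ≤ φ w}

open Metric Set

section NormedSpace

variable {E : Type*} [NormedAddCommGroup E] [NormedSpace ℝ E]

theorem minTime_closedBall (c : E) {r : ℝ} (hr : 0 ≤ r) (x : E) :
    minTime (closedBall 0 1) (closedBall c r) x = ((max (dist x c - r) 0 : ℝ) : EReal) := by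
  apply le_antisymm
  · apply sInf_le
    refine ⟨_, le_max_right _ _, rfl, ?_⟩
    rcases le_or_gt (dist x c) r with hxc | hxc
    · exact ⟨0, by simp, by simpa [max_eq_right (sub_nonpos.2 hxc)] using hxc⟩
    -- move straight towards the centre, until the distance to it has dropped to `r`
    set d := dist x c
    have hd : 0 < d := hr.trans_lt hxc
    refine ⟨d⁻¹ • (c - x), ?_, ?_⟩
    · rw [mem_closedBall_zero_iff, norm_smul, norm_inv, Real.norm_of_nonneg hd.le,
        ← dist_eq_norm', inv_mul_cancel₀ hd.ne']
    · have hpoint : x + (d - r) • d⁻¹ • (c - x) - c = (r * d⁻¹) • (x - c) := by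
        rw [smul_smul, sub_mul, mul_inv_cancel₀ hd.ne']
        module
      rw [max_eq_left (by linarith), mem_closedBall, dist_eq_norm, hpoint, norm_smul,
        ← dist_eq_norm, Real.norm_of_nonneg (by positivity), inv_mul_cancel_right₀ hd.ne']
  · refine le_sInf ?_
    rintro _ ⟨t, ht, rfl, f, hf, hxf⟩
    rw [mem_closedBall_zero_iff] at hf
    have hstep : dist x (x + t • f) ≤ t := by
      rw [dist_self_add_right, norm_smul, Real.norm_of_nonneg ht]
      exact mul_le_of_le_one_right ht hf
    have := dist_triangle x (x + t • f) c
    exact EReal.coe_le_coe_iff.2 (max_le (by linarith [mem_closedBall.1 hxf]) ht)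

theorem add_max_dist_sub_le_of_norming (ℓ : E →ₗ[ℝ] ℝ) (hℓ : ∀ y, ℓ y ≤ ‖y‖) {c x : E} {r : ℝ}
    (hx : ℓ (x - c) = ‖x - c‖) (hrx : r ≤ ‖x - c‖) (w : E) :
    ℓ (w - x) + max (dist x c - r) 0 ≤ max (dist w c - r) 0 := by
  have hsplit : ℓ (w - x) = ℓ (w - c) - ℓ (x - c) := by
    rw [← map_sub, sub_sub_sub_cancel_right]
  rw [dist_eq_norm, dist_eq_norm, max_eq_left (by linarith), hsplit, hx]
  linarith [hℓ (w - c), le_max_left (‖w - c‖ - r) 0]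

end NormedSpace

theorem mem_subdiff2_of_le {g : ℝ × ℝ → ℝ} {v z : ℝ × ℝ}
    (h : ∀ w, v.1 * (w.1 - z.1) + v.2 * (w.2 - z.2) + g z ≤ g w) :
    v ∈ subdiff2 (fun w => (g w : EReal)) z := fun w =>
  (EReal.coe_add _ _).symm.trans_le (EReal.coe_le_coe_iff.2 (h w))

theorem mul_fst_add_mul_snd_le_norm {v : ℝ × ℝ} (hv : |v.1| + |v.2| ≤ 1) (y : ℝ × ℝ) :
    v.1 * y.1 + v.2 * y.2 ≤ ‖y‖ :=
  calc v.1 * y.1 + v.2 * y.2 ≤ |v.1| * ‖y‖ + |v.2| * ‖y‖ := by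
        have h1 := mul_le_mul_of_nonneg_left (norm_fst_le y) (abs_nonneg v.1)
        have h2 := mul_le_mul_of_nonneg_left (norm_snd_le y) (abs_nonneg v.2)
        rw [Real.norm_eq_abs, ← abs_mul] at h1 h2
        linarith [le_abs_self (v.1 * y.1), le_abs_self (v.2 * y.2)]
    _ ≤ ‖y‖ := by nlinarith [norm_nonneg y]

theorem mem_subdiff2_minTime_closedBall {a b r : ℝ} (hr : 0 ≤ r) {v x : ℝ × ℝ}
    (hv : |v.1| + |v.2| ≤ 1) (hx : ‖x - (a, b)‖ ≤ v.1 * (x.1 - a) + v.2 * (x.2 - b))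
    (hrx : r ≤ ‖x - (a, b)‖) :
    v ∈ subdiff2 (minTime (closedBall 0 1) (closedBall (a, b) r)) x := by
  rw [show minTime _ _ = _ from funext (minTime_closedBall _ hr)]
  refine mem_subdiff2_of_le fun w => ?_
  let ℓ : ℝ × ℝ →ₗ[ℝ] ℝ := v.1 • LinearMap.fst ℝ ℝ ℝ + v.2 • LinearMap.snd ℝ ℝ ℝ
  have hℓ (y : ℝ × ℝ) : ℓ y = v.1 * y.1 + v.2 * y.2 := rfl
  have hnorming : ℓ (x - (a, b)) = ‖x - (a, b)‖ :=
    le_antisymm (mul_fst_add_mul_snd_le_norm hv (x - (a, b))) hx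
  have hℓ_le (y : ℝ × ℝ) : ℓ y ≤ ‖y‖ := mul_fst_add_mul_snd_le_norm hv y
  simpa [hℓ] using add_max_dist_sub_le_of_norming ℓ hℓ_le hnorming hrx w

theorem zero_mem_subdiff2_minTime_closedBall {c x : ℝ × ℝ} {r : ℝ} (hr : 0 ≤ r)
    (hx : x ∈ closedBall c r) :
    (0, 0) ∈ subdiff2 (minTime (closedBall 0 1) (closedBall c r)) x := by
  rw [show minTime _ _ = _ from funext (minTime_closedBall _ hr)]
  refine mem_subdiff2_of_le fun w => ?_
  simp [max_eq_right (sub_nonpos.2 (mem_closedBall.1 hx))]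

/-- Subgradients of minimal time functions with square dynamics
`F = [−1,1] × [−1,1]` and square target `Ω = [a−r, a+r] × [b−r, b+r]`. -/
theorem stmt_14 (a b r : ℝ) (hr : 0 < r)
    (F : Set (ℝ × ℝ)) (hF : F = Set.Icc (-1 : ℝ) 1 ×ˢ Set.Icc (-1 : ℝ) 1)
    (Ω : Set (ℝ × ℝ)) (hΩ : Ω = Set.Icc (a - r) (a + r) ×ˢ Set.Icc (b - r) (b + r))
    (xb : ℝ × ℝ) :
    (|xb.2 - b| ≤ xb.1 - a → a + r < xb.1 →
      ((1, 0) : ℝ × ℝ) ∈ subdiff2 (minTime F Ω) xb) ∧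
    (|xb.2 - b| ≤ a - xb.1 → xb.1 < a - r →
      ((-1, 0) : ℝ × ℝ) ∈ subdiff2 (minTime F Ω) xb) ∧
    (|xb.1 - a| ≤ xb.2 - b → b + r < xb.2 →
      ((0, 1) : ℝ × ℝ) ∈ subdiff2 (minTime F Ω) xb) ∧
    (|xb.1 - a| ≤ b - xb.2 → xb.2 < b - r →
      ((0, -1) : ℝ × ℝ) ∈ subdiff2 (minTime F Ω) xb) ∧
    (xb ∈ Ω → ((0, 0) : ℝ × ℝ) ∈ subdiff2 (minTime F Ω) xb) := by
  -- `ℝ × ℝ` carries the sup norm, whose balls are the squares of right position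
  have hF' : F = closedBall 0 1 := by
    rw [hF, Prod.zero_eq_mk, ← closedBall_prod_same, Real.closedBall_eq_Icc]
    norm_num
  have hΩ' : Ω = closedBall (a, b) r := by
    rw [hΩ, ← closedBall_prod_same, Real.closedBall_eq_Icc, Real.closedBall_eq_Icc]
  subst hF' hΩ'
  refine ⟨fun h1 h2 => ?_, fun h1 h2 => ?_, fun h1 h2 => ?_, fun h1 h2 => ?_,
    zero_mem_subdiff2_minTime_closedBall hr.le⟩ <;>
    refine mem_subdiff2_minTime_closedBall hr.le (by norm_num) ?_ ?_ <;>
    simp only [Prod.norm_def, Prod.fst_sub, Prod.snd_sub, Real.norm_eq_abs] <;> grind [abs_le]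
end

section
/- Let X be a real normed space, let F ⊆ X be a nonempty closed bounded convex set with 0 in the interior of F, and let Ω ⊆ X be a nonempty closed set. Then the minimal time function T^F_Ω is Lipschitz continuous on X, i.e., there exists L ≥ 0 such that |T^F_Ω(x) − T^F_Ω(y)| ≤ L‖x − y‖ for all x, y ∈ X; in particular T^F_Ω is finite everywhere. -/
namespace MinTime

section Module

variable {X : Type*} [AddCommGroup X] [Module ℝ X] {F Ω : Set X}

def timeSet (F Ω : Set X) (x : X) : Set ℝ :=
  {t | 0 ≤ t ∧ ∃ f ∈ F, x + t • f ∈ Ω}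

theorem minTime_eq_sInf_image_timeSet (x : X) :
    minTime F Ω x = sInf ((↑) '' timeSet F Ω x) := by
  unfold minTime timeSet
  congr 1
  ext e
  constructor
  · rintro ⟨t, ht0, rfl, hf⟩
    exact ⟨t, ⟨ht0, hf⟩, rfl⟩
  · rintro ⟨t, ⟨ht0, hf⟩, rfl⟩
    exact ⟨t, ht0, rfl, hf⟩

theorem minTime_eq_coe_sInf {x : X} (hne : (timeSet F Ω x).Nonempty) :
    minTime F Ω x = ↑(sInf (timeSet F Ω x)) := by
  rw [minTime_eq_sInf_image_timeSet]
  exact (EReal.coe_strictMono.monotone.map_csInf_of_continuousAt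
    continuous_coe_real_ereal.continuousAt hne ⟨0, fun _ ht => ht.1⟩).symm

theorem add_mem_timeSet (hF : Convex ℝ F) {x y v : X} {t d : ℝ} (ht : t ∈ timeSet F Ω y)
    (hd : 0 ≤ d) (hv : v ∈ F) (hxy : x + d • v = y) : t + d ∈ timeSet F Ω x := by
  obtain ⟨ht0, f, hf, hfΩ⟩ := ht
  rcases hd.eq_or_lt with rfl | hd
  · rw [zero_smul, add_zero] at hxy
    subst hxy
    simpa using ⟨ht0, f, hf, hfΩ⟩
  have hs : 0 < t + d := by linarith
  refine ⟨hs.le, (t / (t + d)) • f + (d / (t + d)) • v,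
    hF hf hv (by positivity) (by positivity) (by field_simp), ?_⟩
  -- the combined trajectory first runs `v` for time `d`, then `f` for time `t`
  have hend : x + (t + d) • ((t / (t + d)) • f + (d / (t + d)) • v) = y + t • f := by
    rw [smul_add, smul_smul, smul_smul, mul_div_cancel₀ _ hs.ne', mul_div_cancel₀ _ hs.ne', ← hxy]
    abel
  rwa [hend]

end Module

section Normed

variable {X : Type*} [NormedAddCommGroup X] [NormedSpace ℝ X] {F Ω : Set X} {r : ℝ}

theorem add_norm_div_mem_timeSet (hF : Convex ℝ F) (hr : 0 < r)
    (hball : Metric.closedBall 0 r ⊆ F) {t : ℝ} {y : X} (ht : t ∈ timeSet F Ω y) (x : X) :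
    t + ‖x - y‖ / r ∈ timeSet F Ω x := by
  rcases eq_or_ne x y with rfl | hxy
  · simpa using ht
  have hn : 0 < ‖x - y‖ := norm_pos_iff.2 (sub_ne_zero.2 hxy)
  refine add_mem_timeSet hF ht (by positivity) (v := (r / ‖x - y‖) • (y - x)) (hball ?_) ?_
  · rw [mem_closedBall_zero_iff, norm_smul, Real.norm_of_nonneg (by positivity), norm_sub_rev y x,
      div_mul_cancel₀ _ hn.ne']
  · have hd : ‖x - y‖ / r * (r / ‖x - y‖) = 1 := by field_simp
    rw [smul_smul, hd, one_smul, add_sub_cancel]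

theorem timeSet_nonempty (hF : Convex ℝ F) (hr : 0 < r) (hball : Metric.closedBall 0 r ⊆ F)
    (hΩ : Ω.Nonempty) (x : X) : (timeSet F Ω x).Nonempty := by
  obtain ⟨ω, hω⟩ := hΩ
  have h0 : (0 : ℝ) ∈ timeSet F Ω ω :=
    ⟨le_rfl, 0, hball (Metric.mem_closedBall_self hr.le), by simpa using hω⟩
  exact ⟨_, add_norm_div_mem_timeSet hF hr hball h0 x⟩

theorem sInf_timeSet_le (hF : Convex ℝ F) (hr : 0 < r) (hball : Metric.closedBall 0 r ⊆ F)
    (hΩ : Ω.Nonempty) (x y : X) :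
    sInf (timeSet F Ω x) ≤ sInf (timeSet F Ω y) + r⁻¹ * ‖x - y‖ := by
  rw [← div_eq_inv_mul, ← sub_le_iff_le_add]
  exact le_csInf (timeSet_nonempty hF hr hball hΩ y) fun t ht =>
    sub_le_iff_le_add.2 (csInf_le ⟨0, fun _ hs => hs.1⟩ (add_norm_div_mem_timeSet hF hr hball ht x))

end Normed

end MinTime

open MinTime in
theorem stmt_18_general {X : Type*} [NormedAddCommGroup X] [NormedSpace ℝ X]
    (F : Set X) (hFconv : Convex ℝ F)
    (h0F : (0 : X) ∈ interior F)
    (Ω : Set X) (hΩne : Ω.Nonempty) :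
    (∀ x : X, minTime F Ω x ≠ ⊤) ∧
    ∃ L : ℝ, 0 ≤ L ∧ ∀ x y : X,
      |(minTime F Ω x).toReal - (minTime F Ω y).toReal| ≤ L * ‖x - y‖ := by
  obtain ⟨r, hr, hball⟩ := Metric.nhds_basis_closedBall.mem_iff.1 (mem_interior_iff_mem_nhds.1 h0F)
  have hmin (x : X) : minTime F Ω x = ↑(sInf (timeSet F Ω x)) :=
    minTime_eq_coe_sInf (timeSet_nonempty hFconv hr hball hΩne x)
  have hle := sInf_timeSet_le hFconv hr hball hΩne
  refine ⟨fun x => hmin x ▸ EReal.coe_ne_top _, r⁻¹, by positivity, fun x y => ?_⟩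
  simp only [hmin, EReal.toReal_coe]
  rw [abs_sub_le_iff]
  exact ⟨by linarith [hle x y], by linarith [norm_sub_rev x y ▸ hle y x]⟩

/-- If `0` lies in the interior of the dynamics `F`, then the minimal time
function `T^F_Ω` is finite everywhere and Lipschitz continuous on `X`. -/
theorem stmt_18 {X : Type*} [NormedAddCommGroup X] [NormedSpace ℝ X]
    (F : Set X) (hFne : F.Nonempty) (hFcl : IsClosed F)
    (hFbd : Bornology.IsBounded F) (hFconv : Convex ℝ F)
    (h0F : (0 : X) ∈ interior F)
    (Ω : Set X) (hΩne : Ω.Nonempty) (hΩcl : IsClosed Ω) :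
    (∀ x : X, minTime F Ω x ≠ ⊤) ∧
    ∃ L : ℝ, 0 ≤ L ∧ ∀ x y : X,
      |(minTime F Ω x).toReal - (minTime F Ω y).toReal| ≤ L * ‖x - y‖ :=
  stmt_18_general F hFconv h0F Ω hΩne
end
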